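/- arXiv:2108.08079 — 6 statements merged into one kernel-verified Lean document; each statement's English description precedes it below -/
import Mathlib

section
/- Let P be a ground definite program over a type A of ground atoms and S ⊆ A a specification. If every atom A₀ ∈ S is covered by P with respect to S, and P is recurrent with respect to some level mapping ℓ : A → ℕ, then P is complete with respect to S, i.e., S is contained in the least Herbrand model M_P of P. -/
/-- Ground terms of the n-queens program. -/
inductive Term : Type where
  | zero : Term
  | succ : Term → Term
  | nil  : Term
  | cons : Term → Term → Term

/-- The numeral `⌜n⌝`: `succ` applied `n` times to `zero`. -/
def numeral : ℕ → Term
  | 0 => Term.zero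
  | n + 1 => Term.succ (numeral n)

/-- `NthMember k e t`: `e` is the `k`-th member (`k ≥ 1`) of the term `t`. -/
inductive NthMember : ℕ → Term → Term → Prop where
  | head (e t' : Term) : NthMember 1 e (Term.cons e t')
  | tail {k : ℕ} {e t' : Term} (e₁ : Term) :
      NthMember k e t' → NthMember (k + 1) e (Term.cons e₁ t')

/-- `e` is a member of `t`. -/
def IsMember (e t : Term) : Prop := ∃ k : ℕ, 1 ≤ k ∧ NthMember k e t

/-- `t` is a list of length `n`. -/
inductive ListOfLength : ℕ → Term → Prop where
  | nil : ListOfLength 0 Term.nil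
  | cons {n : ℕ} {t : Term} (e : Term) :
      ListOfLength n t → ListOfLength (n + 1) (Term.cons e t)

/-- `t` is a list (of some length). -/
def IsList (t : Term) : Prop := ∃ n : ℕ, ListOfLength n t

/-- `t` is a list of pairwise distinct members. -/
def DistinctList (t : Term) : Prop :=
  IsList t ∧
  ∀ (k k' : ℕ) (e e' : Term),
    NthMember k e t → NthMember k' e' t → k ≠ k' → e ≠ e'

/-- The triple `(cs, us, ds)` is correct up to `m` w.r.t. `i`
(`0 ≤ m ≤ i`).  The up-diagonal number of queen `j` sitting at the `k`-th
column is the integer `k + j - i`, the down-diagonal number is `k + i - j`. -/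
def CorrectUpTo (m i : ℕ) (cs us ds : Term) : Prop :=
  m ≤ i ∧
  DistinctList cs ∧
  (∀ j : ℕ, 1 ≤ j → j ≤ m → IsMember (numeral j) cs) ∧
  -- the up-diagonal numbers of 1,…,m are pairwise distinct
  (∀ j j' k k' : ℕ, 1 ≤ j → j ≤ m → 1 ≤ j' → j' ≤ m → j ≠ j' →
    NthMember k (numeral j) cs → NthMember k' (numeral j') cs →
    (k : ℤ) + j - i ≠ (k' : ℤ) + j' - i) ∧
  -- the down-diagonal numbers of 1,…,m are pairwise distinct
  (∀ j j' k k' : ℕ, 1 ≤ j → j ≤ m → 1 ≤ j' → j' ≤ m → j ≠ j' →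
    NthMember k (numeral j) cs → NthMember k' (numeral j') cs →
    (k : ℤ) + i - j ≠ (k' : ℤ) + i - j') ∧
  -- positive up-diagonal numbers are recorded in us
  (∀ j k l : ℕ, 1 ≤ j → j ≤ m → NthMember k (numeral j) cs →
    (l : ℤ) = (k : ℤ) + j - i → 0 < l → NthMember l (numeral j) us) ∧
  -- positive down-diagonal numbers are recorded in ds
  (∀ j k l : ℕ, 1 ≤ j → j ≤ m → NthMember k (numeral j) cs →
    (l : ℤ) = (k : ℤ) + i - j → 0 < l → NthMember l (numeral j) ds)

/-- Ground atoms. -/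
inductive Atom : Type where
  | pq  : Term → Term → Term → Term → Atom
  | pqs : Term → Term → Term → Term → Atom

/-- `S` is an (Herbrand) model of the ground definite program `P`:
for every clause `(H, B) ∈ P` whose body atoms all lie in `S`, also `H ∈ S`. -/
def IsModel {A : Type} (P : Set (A × List A)) (S : Set A) : Prop :=
  ∀ (H : A) (B : List A), (H, B) ∈ P → (∀ b ∈ B, b ∈ S) → H ∈ S

/-- The least Herbrand model of `P` (the least set of atoms closed
under all the clauses of `P`). -/
def LeastModel {A : Type} (P : Set (A × List A)) : Set A :=
  ⋂₀ { S : Set A | IsModel P S }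

/-- The ground instances of the four clauses of the program NQUEENS. -/
inductive NQClause : Atom × List Atom → Prop where
  | c1 (x y z : Term) :
      NQClause (Atom.pqs Term.zero x y z, [])
  | c2 (i cs us ds u d : Term) :
      NQClause (Atom.pqs (Term.succ i) cs us (Term.cons d ds),
        [Atom.pqs i cs (Term.cons u us) ds, Atom.pq (Term.succ i) cs us ds])
  | c3 (i c u d : Term) :
      NQClause (Atom.pq i (Term.cons i c) (Term.cons i u) (Term.cons i d), [])
  | c4 (i cs us ds c u d : Term) :
      NQClause (Atom.pq i (Term.cons c cs) (Term.cons u us) (Term.cons d ds),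
        [Atom.pq i cs us ds])

/-- The program NQUEENS as a set of ground clauses. -/
def NQUEENS : Set (Atom × List Atom) := { cl | NQClause cl }

/-- The ground instances of the two clauses defining `pq`. -/
inductive PQClause : Atom × List Atom → Prop where
  | c3 (i c u d : Term) :
      PQClause (Atom.pq i (Term.cons i c) (Term.cons i u) (Term.cons i d), [])
  | c4 (i cs us ds c u d : Term) :
      PQClause (Atom.pq i (Term.cons c cs) (Term.cons u us) (Term.cons d ds),
        [Atom.pq i cs us ds])

/-- The program defining `pq`, as a set of ground clauses. -/
def PQprog : Set (Atom × List Atom) := { cl | PQClause cl }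

/-- The specification `S_pq`. -/
def SpecPq : Set Atom :=
  { a | ∃ (i cs us ds : Term) (k : ℕ), 1 ≤ k ∧ a = Atom.pq i cs us ds ∧
        NthMember k i cs ∧ NthMember k i us ∧ NthMember k i ds }

/-- The specification `S_pqs` (for correctness). -/
def SpecPqs : Set Atom :=
  { a | ∃ cs us ds : Term, a = Atom.pqs Term.zero cs us ds } ∪
  { a | ∃ (i : ℕ) (cs us t ds : Term), 1 ≤ i ∧
        a = Atom.pqs (numeral i) cs us (Term.cons t ds) ∧
        (∀ j : ℕ, 1 ≤ j → j ≤ i → IsMember (numeral j) cs) ∧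
        (DistinctList cs → CorrectUpTo i i cs us ds) }

/-- The specification `S = S_pq ∪ S_pqs` (for correctness). -/
def Spec : Set Atom := SpecPq ∪ SpecPqs

/-- The specification `S⁰` (for completeness). -/
def Spec0 : Set Atom :=
  SpecPq ∪ { a | ∃ cs us ds : Term, a = Atom.pqs Term.zero cs us ds } ∪
  { a | ∃ (i : ℕ) (cs us t ds : Term), 1 ≤ i ∧
        a = Atom.pqs (numeral i) cs us (Term.cons t ds) ∧
        CorrectUpTo i i cs us ds }

/-- The size function on terms. -/
def tsize : Term → ℕ
  | Term.zero => 0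
  | Term.nil => 0
  | Term.succ t => 1 + tsize t
  | Term.cons _ t => 1 + tsize t

/-- The level mapping on ground atoms. -/
def level : Atom → ℕ
  | Atom.pq _ cs _ _ => tsize cs
  | Atom.pqs i cs _ _ => tsize i + tsize cs

/-- if every atom of `S` is covered by `P` w.r.t. `S`
and `P` is recurrent w.r.t. some level mapping, then `P` is complete
w.r.t. `S`, i.e. `S ⊆ M_P`. -/
theorem complete_of_covered_of_recurrent {A : Type} (P : Set (A × List A)) (S : Set A)
    (hcov : ∀ a ∈ S, ∃ B : List A, (a, B) ∈ P ∧ ∀ b ∈ B, b ∈ S)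
    (hrec : ∃ ℓ : A → ℕ, ∀ (H : A) (B : List A), (H, B) ∈ P → ∀ b ∈ B, ℓ b < ℓ H) :
    S ⊆ LeastModel P := by
  obtain ⟨ℓ, hℓ⟩ := hrec
  have key : ∀ n : ℕ, ∀ a ∈ S, ℓ a < n → a ∈ LeastModel P := by
    intro n
    induction n with
    | zero => intro a _ h; omega
    | succ n ih =>
      intro a ha hlt
      obtain ⟨B, hB, hBS⟩ := hcov a ha
      intro M hM
      exact hM a B hB (fun b hb => ih b (hBS b hb)
        (lt_of_lt_of_le (hℓ a B hB b hb) (Nat.lt_succ_iff.mp hlt)) M hM)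
  exact fun a ha => key (ℓ a + 1) a ha (Nat.lt_succ_self _)
end

section
/- (Lemma 3, first implication.) Let m, i ∈ ℕ with 0 < m ≤ i, and let cs, us, ds, t, t' be ground terms. If the triple (cs, cons t us, ds) is correct up to m w.r.t. i, then the triple (cs, us, cons t' ds) is correct up to m w.r.t. i + 1. -/
theorem nthMember_pos {k : ℕ} {e t : Term} (h : NthMember k e t) : 1 ≤ k := by
  cases h <;> omega

/-- Lemma 3, first implication. -/
theorem lemma3_first (m i : ℕ) (cs us ds t t' : Term)
    (hm : 0 < m) (hmi : m ≤ i)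
    (h : CorrectUpTo m i cs (Term.cons t us) ds) :
    CorrectUpTo m (i + 1) cs us (Term.cons t' ds) := by
  obtain ⟨h1, h2, h3, h4, h5, h6, h7⟩ := h
  refine ⟨by omega, h2, h3, ?_, ?_, ?_, ?_⟩
  · intro j j' k k' hj hjm hj' hjm' hne hk hk' heq
    exact h4 j j' k k' hj hjm hj' hjm' hne hk hk' (by omega)
  · intro j j' k k' hj hjm hj' hjm' hne hk hk' heq
    exact h5 j j' k k' hj hjm hj' hjm' hne hk hk' (by omega)
  · intro j k l hj hjm hk hl hlpos
    have := h6 j k (l + 1) hj hjm hk (by omega) (by omega)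
    cases this with
    | head => omega
    | tail _ h' => exact h'
  · intro j k l hj hjm hk hl hlpos
    have hk1 := nthMember_pos hk
    have hl2 : 2 ≤ l := by omega
    have := h7 j k (l - 1) hj hjm hk (by omega) (by omega)
    have : NthMember (l - 1 + 1) (numeral j) (Term.cons t' ds) :=
      NthMember.tail t' this
    have hle : l - 1 + 1 = l := by omega
    rwa [hle] at this
end

section
/- (Lemma 3, second implication.) Let m, i ∈ ℕ with 0 < m ≤ i, and let cs, us, ds, t' be ground terms. If the triple (cs, us, cons t' ds) is correct up to m w.r.t. i + 1, then there exists a ground term t such that the triple (cs, cons t us, ds) is correct up to m w.r.t. i. -/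
lemma nth_tail_inv {k : ℕ} {e a t : Term} (hk : 1 ≤ k)
    (h : NthMember (k+1) e (Term.cons a t)) : NthMember k e t := by
  cases h with
  | head => omega
  | tail _ h' => exact h'

/-- Lemma 3, second implication. -/
theorem lemma3_second (m i : ℕ) (cs us ds t' : Term)
    (hm : 0 < m) (hmi : m ≤ i)
    (h : CorrectUpTo m (i + 1) cs us (Term.cons t' ds)) :
    ∃ t : Term, CorrectUpTo m i cs (Term.cons t us) ds := by
  classical
  obtain ⟨hmi', hdist, hmem, hup, hdown, hrecup, hrecdn⟩ := h
  by_cases hex : ∃ j k : ℕ, 1 ≤ j ∧ j ≤ m ∧ NthMember k (numeral j) cs ∧ k + j = i + 1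
  · obtain ⟨j₀, k₀, hj₀1, hj₀m, hnth₀, hsum₀⟩ := hex
    refine ⟨numeral j₀, hmi, hdist, hmem, ?_, ?_, ?_, ?_⟩
    · intro j j' k k' h1 h2 h3 h4 h5 h6 h7 heq
      exact hup j j' k k' h1 h2 h3 h4 h5 h6 h7 (by push_cast; push_cast at heq; omega)
    · intro j j' k k' h1 h2 h3 h4 h5 h6 h7 heq
      exact hdown j j' k k' h1 h2 h3 h4 h5 h6 h7 (by push_cast; push_cast at heq; omega)
    · intro j k l hj1 hjm hk heq hl
      rcases Nat.lt_or_ge 1 l with h2 | h1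
      · have h' : NthMember (l-1) (numeral j) us := by
          apply hrecup j k (l-1) hj1 hjm hk
          · push_cast; omega
          · omega
        rw [show l = (l-1)+1 by omega]
        exact NthMember.tail _ h'
      · have hl1 : l = 1 := by omega
        subst hl1
        have hkj : k + j = i + 1 := by omega
        have hjj : j = j₀ := by
          by_contra hne
          exact hup j j₀ k k₀ hj1 hjm hj₀1 hj₀m hne hk hnth₀ (by push_cast; omega)
        subst hjj
        exact NthMember.head _ _
    · intro j k l hj1 hjm hk heq hl
      have h' : NthMember (l+1) (numeral j) (Term.cons t' ds) :=
        hrecdn j k (l+1) hj1 hjm hk (by push_cast; omega) (by omega)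
      exact nth_tail_inv hl h'
  · refine ⟨Term.zero, hmi, hdist, hmem, ?_, ?_, ?_, ?_⟩
    · intro j j' k k' h1 h2 h3 h4 h5 h6 h7 heq
      exact hup j j' k k' h1 h2 h3 h4 h5 h6 h7 (by push_cast; push_cast at heq; omega)
    · intro j j' k k' h1 h2 h3 h4 h5 h6 h7 heq
      exact hdown j j' k k' h1 h2 h3 h4 h5 h6 h7 (by push_cast; push_cast at heq; omega)
    · intro j k l hj1 hjm hk heq hl
      rcases Nat.lt_or_ge 1 l with h2 | h1
      · have h' : NthMember (l-1) (numeral j) us := by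
          apply hrecup j k (l-1) hj1 hjm hk
          · push_cast; omega
          · omega
        rw [show l = (l-1)+1 by omega]
        exact NthMember.tail _ h'
      · exact absurd ⟨j, k, hj1, hjm, hk, by omega⟩ hex
    · intro j k l hj1 hjm hk heq hl
      have h' : NthMember (l+1) (numeral j) (Term.cons t' ds) :=
        hrecdn j k (l+1) hj1 hjm hk (by push_cast; omega) (by omega)
      exact nth_tail_inv hl h'
end

section
/- (Completeness of NQUEENS.) The specification S⁰ is contained in the least Herbrand model M of the program NQUEENS; that is, NQUEENS is complete with respect to S⁰. -/
lemma nth_zero {e t : Term} : ¬ NthMember 0 e t := by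
  intro h; cases h

lemma lm_step {H : Atom} {B : List Atom} (hcl : NQClause (H, B))
    (hb : ∀ b ∈ B, b ∈ LeastModel NQUEENS) : H ∈ LeastModel NQUEENS := by
  intro S hS
  exact hS H B hcl (fun b hbB => hb b hbB S hS)

lemma nth_succ_inv {k : ℕ} {e e₁ t : Term} (hk : 1 ≤ k)
    (h : NthMember (k + 1) e (Term.cons e₁ t)) : NthMember k e t := by
  cases h with
  | head => omega
  | tail _ h' => exact h'

lemma nth_cons {k : ℕ} {e t : Term} (h : NthMember k e t) :
    ∃ e₁ t', t = Term.cons e₁ t' := by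
  cases h with
  | head e t' => exact ⟨e, t', rfl⟩
  | tail e₁ h' => exact ⟨e₁, _, rfl⟩

lemma pq_complete {i cs us ds : Term} {k : ℕ} (hk : 1 ≤ k)
    (h1 : NthMember k i cs) (h2 : NthMember k i us) (h3 : NthMember k i ds) :
    Atom.pq i cs us ds ∈ LeastModel NQUEENS := by
  induction k generalizing cs us ds with
  | zero => exact absurd h1 nth_zero
  | succ k ih =>
    rcases Nat.eq_zero_or_pos k with hk0 | hk1
    · subst hk0
      cases h1 with
      | head e c =>
        cases h2 with
        | head e u =>
          cases h3 with
          | head e d => exact lm_step (NQClause.c3 i c u d) (by simp)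
          | tail _ h' => exact absurd h' nth_zero
        | tail _ h' => exact absurd h' nth_zero
      | tail _ h' => exact absurd h' nth_zero
    · obtain ⟨c, cs', rfl⟩ := nth_cons h1
      obtain ⟨u, us', rfl⟩ := nth_cons h2
      obtain ⟨d, ds', rfl⟩ := nth_cons h3
      have h1' := nth_succ_inv hk1 h1
      have h2' := nth_succ_inv hk1 h2
      have h3' := nth_succ_inv hk1 h3
      refine lm_step (NQClause.c4 i cs' us' ds' c u d) ?_
      intro b hb
      simp only [List.mem_singleton] at hb
      subst hb
      exact ih hk1 h1' h2' h3'

/-- Invariant for the completeness induction on `m`. -/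
def Good (cs : Term) (m : ℕ) (us ds : Term) : Prop :=
  ∀ j : ℕ, 1 ≤ j → j ≤ m → ∃ k : ℕ, 1 ≤ k ∧ NthMember k (numeral j) cs ∧
    NthMember (k + m - j) (numeral j) ds ∧
    (m < k + j → NthMember (k + j - m) (numeral j) us)

lemma pqs_complete (cs : Term) :
    ∀ m : ℕ,
    (∀ j j' k k' : ℕ, 1 ≤ j → j ≤ m → 1 ≤ j' → j' ≤ m → j ≠ j' →
      NthMember k (numeral j) cs → NthMember k' (numeral j') cs → k + j ≠ k' + j') →
    ∀ us ds : Term, Good cs m us ds →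
    ∀ t : Term, Atom.pqs (numeral m) cs us (Term.cons t ds) ∈ LeastModel NQUEENS := by
  intro m
  induction m with
  | zero =>
    intro _ us ds _ t
    exact lm_step (NQClause.c1 cs us (Term.cons t ds)) (by simp)
  | succ m ih =>
    intro hd us ds hG t
    obtain ⟨k, hk1, hkcs, hkds, hkus⟩ := hG (m + 1) (by omega) le_rfl
    have hkds' : NthMember k (numeral (m + 1)) ds := by
      have : k + (m + 1) - (m + 1) = k := by omega
      rwa [this] at hkds
    have hkus' : NthMember k (numeral (m + 1)) us := by
      have h := hkus (by omega)
      have : k + (m + 1) - (m + 1) = k := by omega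
      rwa [this] at h
    have hpq : Atom.pq (numeral (m + 1)) cs us ds ∈ LeastModel NQUEENS :=
      pq_complete hk1 hkcs hkus' hkds'
    obtain ⟨d, ds', rfl⟩ := nth_cons hkds'
    -- choose the new element `u` of the up-diagonal list
    by_cases hex : ∃ j₀ k₀ : ℕ, 1 ≤ j₀ ∧ j₀ ≤ m ∧ NthMember k₀ (numeral j₀) cs ∧
        k₀ + j₀ = m + 1
    case pos =>
      obtain ⟨j₀, k₀, hj₀1, hj₀m, hk₀cs, hk₀⟩ := hex
      refine lm_step (NQClause.c2 (numeral m) cs us (Term.cons d ds') (numeral j₀) t) ?_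
      intro b hb
      simp only [List.mem_cons, List.mem_singleton, List.not_mem_nil, or_false] at hb
      rcases hb with rfl | rfl
      · refine ih (fun j j' a b h1 h2 h3 h4 h5 h6 h7 =>
          hd j j' a b h1 (by omega) h3 (by omega) h5 h6 h7) _ _ ?_ d
        intro j hj1 hjm
        obtain ⟨kj, hkj1, hkjcs, hkjds, hkjus⟩ := hG j hj1 (by omega)
        refine ⟨kj, hkj1, hkjcs, ?_, ?_⟩
        · -- membership in ds'
          have hidx : kj + (m + 1) - j = (kj + m - j) + 1 := by omega
          rw [hidx] at hkjds
          exact nth_succ_inv (by omega) hkjds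
        · intro hlt
          rcases Nat.lt_or_ge (m + 1) (kj + j) with hlt' | hge
          · have h := hkjus hlt'
            have := NthMember.tail (t' := us) (numeral j₀) h
            have hidx : kj + j - (m + 1) + 1 = kj + j - m := by omega
            rwa [hidx] at this
          · -- kj + j = m + 1 : the new head element
            have heq : kj + j = m + 1 := by omega
            have hjj₀ : j = j₀ := by
              by_contra hne
              exact hd j j₀ kj k₀ hj1 (by omega) hj₀1 (by omega) hne hkjcs hk₀cs
                (by omega)
            subst hjj₀
            have hidx : kj + j - m = 1 := by omega
            rw [hidx]
            exact NthMember.head (numeral j) us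
      · exact hpq
    case neg =>
      refine lm_step (NQClause.c2 (numeral m) cs us (Term.cons d ds') Term.zero t) ?_
      intro b hb
      simp only [List.mem_cons, List.mem_singleton, List.not_mem_nil, or_false] at hb
      rcases hb with rfl | rfl
      · refine ih (fun j j' a b h1 h2 h3 h4 h5 h6 h7 =>
          hd j j' a b h1 (by omega) h3 (by omega) h5 h6 h7) _ _ ?_ d
        intro j hj1 hjm
        obtain ⟨kj, hkj1, hkjcs, hkjds, hkjus⟩ := hG j hj1 (by omega)
        refine ⟨kj, hkj1, hkjcs, ?_, ?_⟩
        · have hidx : kj + (m + 1) - j = (kj + m - j) + 1 := by omega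
          rw [hidx] at hkjds
          exact nth_succ_inv (by omega) hkjds
        · intro hlt
          rcases Nat.lt_or_ge (m + 1) (kj + j) with hlt' | hge
          · have h := hkjus hlt'
            have := NthMember.tail (t' := us) Term.zero h
            have hidx : kj + j - (m + 1) + 1 = kj + j - m := by omega
            rwa [hidx] at this
          · exact absurd ⟨j, kj, hj1, hjm, hkjcs, by omega⟩ hex
      · exact hpq

/-- Completeness of NQUEENS: the specification `S⁰` is
contained in the least Herbrand model of NQUEENS. -/
theorem nqueens_complete : Spec0 ⊆ LeastModel NQUEENS := by
  intro a ha
  rcases ha with (hpq | hz) | hpqs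
  · obtain ⟨i, cs, us, ds, k, hk, rfl, h1, h2, h3⟩ := hpq
    exact pq_complete hk h1 h2 h3
  · obtain ⟨cs, us, ds, rfl⟩ := hz
    exact lm_step (NQClause.c1 cs us ds) (by simp)
  · obtain ⟨i, cs, us, t, ds, hi, rfl, hcorr⟩ := hpqs
    obtain ⟨_, _, hmem, hup, _, hus, hds⟩ := hcorr
    refine pqs_complete cs i ?_ us ds ?_ t
    · intro j j' k k' h1 h2 h3 h4 h5 h6 h7 heq
      exact hup j j' k k' h1 h2 h3 h4 h5 h6 h7 (by push_cast; omega)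
    · intro j hj1 hji
      obtain ⟨k, hk1, hkcs⟩ := hmem j hj1 hji
      refine ⟨k, hk1, hkcs, ?_, ?_⟩
      · exact hds j k (k + i - j) hj1 hji hkcs (by push_cast [Nat.cast_sub]; omega)
          (by omega)
      · intro hlt
        exact hus j k (k + j - i) hj1 hji hkcs (by push_cast [Nat.cast_sub]; omega)
          (by omega)
end

section
/- (Key step of the correctness proof: S is a model of clause (2).) For all ground terms i, cs, us, ds, t, t₁ over Term: if pqs(i, cs, cons t₁ us, ds) ∈ S and pq(succ i, cs, us, ds) ∈ S_pq, then pqs(succ i, cs, us, cons t ds) ∈ S. Consequently S is a model of every ground instance of the clause pqs(succ I, Cs, Us, cons D Ds) ← pqs(I, Cs, cons U Us, Ds), pq(succ I, Cs, Us, Ds). -/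
lemma nth_pos : ∀ {k : ℕ} {e t : Term}, NthMember k e t → 1 ≤ k := by
  intro k e t h
  induction h with
  | head => omega
  | tail _ _ ih => omega

lemma nth_unique : ∀ {k : ℕ} {e e' t : Term},
    NthMember k e t → NthMember k e' t → e = e' := by
  intro k e e' t h
  induction h generalizing e' with
  | head e t' =>
    intro h'
    cases h' with
    | head => rfl
    | tail _ h'' => exact absurd (nth_pos h'') (by omega)
  | tail e₁ h ih =>
    intro h'
    cases h' with
    | head => exact absurd (nth_pos h) (by omega)
    | tail _ h'' => exact ih h''

lemma pos_unique {t : Term} (hd : DistinctList t) {k k' : ℕ} {e : Term}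
    (h : NthMember k e t) (h' : NthMember k' e t) : k = k' := by
  by_contra hne
  exact hd.2 k k' e e h h' hne rfl

lemma nth_tail {k : ℕ} {e a t : Term} (hk : 1 ≤ k)
    (h : NthMember (k + 1) e (Term.cons a t)) : NthMember k e t := by
  cases h with
  | head => omega
  | tail _ h' => exact h'

lemma numeral_succ (m : ℕ) : numeral (m + 1) = Term.succ (numeral m) := rfl

lemma numeral_inj : ∀ {a b : ℕ}, numeral a = numeral b → a = b := by
  intro a
  induction a with
  | zero =>
    intro b h
    cases b with
    | zero => rfl
    | succ b => simp [numeral] at h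
  | succ a ih =>
    intro b h
    cases b with
    | zero => simp [numeral] at h
    | succ b =>
      simp only [numeral, Term.succ.injEq] at h
      exact congrArg Nat.succ (ih h)

lemma key_step (i cs us ds t t₁ : Term)
    (h1 : Atom.pqs i cs (Term.cons t₁ us) ds ∈ Spec)
    (h2 : Atom.pq (Term.succ i) cs us ds ∈ SpecPq) :
    Atom.pqs (Term.succ i) cs us (Term.cons t ds) ∈ Spec := by
  obtain ⟨i', cs', us', ds', k₀, hk₀, heq, hc, hu, hd⟩ := h2
  injection heq with e1 e2 e3 e4
  subst e1; subst e2; subst e3; subst e4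
  rcases h1 with h1 | h1
  · obtain ⟨_, _, _, _, _, _, heq, _⟩ := h1
    exact Atom.noConfusion heq
  rcases h1 with h1 | h1
  · -- base case: i = zero
    obtain ⟨cs', us', ds', heq⟩ := h1
    injection heq with hi hcs hus hds
    subst hi; subst hcs; subst hds
    refine Or.inr (Or.inr ⟨1, cs, us, t, ds, le_refl 1, rfl, ?_, ?_⟩)
    · intro j hj1 hj2
      have hj : j = 1 := by omega
      subst hj
      exact ⟨k₀, hk₀, hc⟩
    · intro hdist
      have hc1 : NthMember k₀ (numeral 1) cs := hc
      have hu1 : NthMember k₀ (numeral 1) us := hu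
      have hd1 : NthMember k₀ (numeral 1) ds := hd
      refine ⟨le_refl 1, hdist, ?_, ?_, ?_, ?_, ?_⟩
      · intro j hj1 hj2
        have hj : j = 1 := by omega
        subst hj
        exact ⟨k₀, hk₀, hc1⟩
      · intro j j' k k' hj1 hj2 hj1' hj2' hne _ _; omega
      · intro j j' k k' hj1 hj2 hj1' hj2' hne _ _; omega
      · intro j k l hj1 hj2 hk hl hlpos
        have hj : j = 1 := by omega
        subst hj
        have hkk : k = k₀ := pos_unique hdist hk hc1
        have hlk : l = k₀ := by omega
        subst hlk
        exact hu1
      · intro j k l hj1 hj2 hk hl hlpos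
        have hj : j = 1 := by omega
        subst hj
        have hkk : k = k₀ := pos_unique hdist hk hc1
        have hlk : l = k₀ := by omega
        subst hlk
        exact hd1
  · -- inductive case: i = numeral m
    obtain ⟨m, cs', us', t', ds', hm, heq, hmem, hcorr⟩ := h1
    injection heq with hi hcs hus hds
    subst hi; subst hcs; subst hds
    have hus' : us' = Term.cons t₁ us := hus.symm
    subst hus'
    have hcM : NthMember k₀ (numeral (m + 1)) cs := hc
    have huM : NthMember k₀ (numeral (m + 1)) us := hu
    have hdM : NthMember k₀ (numeral (m + 1)) (Term.cons t' ds') := hd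
    refine Or.inr (Or.inr ⟨m + 1, cs, us, t, Term.cons t' ds', by omega, rfl, ?_, ?_⟩)
    · -- members
      intro j hj1 hj2
      rcases Nat.lt_or_ge j (m + 1) with hj | hj
      · exact hmem j hj1 (by omega)
      · have hj' : j = m + 1 := by omega
        subst hj'
        exact ⟨k₀, hk₀, hcM⟩
    · intro hdist
      obtain ⟨_, _, cmem, cup, cdown, cupr, cdownr⟩ := hcorr hdist
      -- uniqueness of the position of numeral (m+1) in cs
      have huniq : ∀ {k : ℕ}, NthMember k (numeral (m + 1)) cs → k = k₀ :=
        fun h => pos_unique hdist h hcM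
      -- a position of numeral j (j ≤ m) in cs differs from k₀ in elements
      have hsmall : ∀ {j k : ℕ}, 1 ≤ j → j ≤ m → NthMember k (numeral j) cs →
          j ≠ m + 1 := by intro j k hj1 hj2 hk; omega
      refine ⟨le_refl _, hdist, ?_, ?_, ?_, ?_, ?_⟩
      · -- members
        intro j hj1 hj2
        rcases Nat.lt_or_ge j (m + 1) with hj | hj
        · exact hmem j hj1 (by omega)
        · have hj' : j = m + 1 := by omega
          subst hj'
          exact ⟨k₀, hk₀, hcM⟩
      · -- up-diagonal numbers pairwise distinct
        intro j j' k k' hj1 hj2 hj1' hj2' hne hk hk' habs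
        rcases Nat.lt_or_ge j (m + 1) with hj | hj <;>
          rcases Nat.lt_or_ge j' (m + 1) with hj' | hj'
        · exact cup j j' k k' hj1 (by omega) hj1' (by omega) hne hk hk' (by omega)
        · -- j ≤ m, j' = m + 1
          have hj'' : j' = m + 1 := by omega
          subst hj''
          have hkk : k' = k₀ := huniq hk'
          subst hkk
          -- up-diag of j (old) is k + j - m = k' + 1 > 0
          have hl : ((k' + 1 : ℕ) : ℤ) = (k : ℤ) + j - m := by push_cast; omega
          have h1 : NthMember (k' + 1) (numeral j) (Term.cons t₁ us) :=
            cupr j k (k' + 1) hj1 (by omega) hk hl (by omega)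
          have h2 : NthMember k' (numeral j) us := nth_tail hk₀ h1
          have : numeral j = numeral (m + 1) := nth_unique h2 huM
          have := numeral_inj this
          omega
        · -- j = m + 1, j' ≤ m
          have hj'' : j = m + 1 := by omega
          subst hj''
          have hkk : k = k₀ := huniq hk
          subst hkk
          have hl : ((k + 1 : ℕ) : ℤ) = (k' : ℤ) + j' - m := by push_cast; omega
          have h1 : NthMember (k + 1) (numeral j') (Term.cons t₁ us) :=
            cupr j' k' (k + 1) hj1' (by omega) hk' hl (by omega)
          have h2 : NthMember k (numeral j') us := nth_tail hk₀ h1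
          have : numeral j' = numeral (m + 1) := nth_unique h2 huM
          have := numeral_inj this
          omega
        · omega
      · -- down-diagonal numbers pairwise distinct
        intro j j' k k' hj1 hj2 hj1' hj2' hne hk hk' habs
        rcases Nat.lt_or_ge j (m + 1) with hj | hj <;>
          rcases Nat.lt_or_ge j' (m + 1) with hj' | hj'
        · exact cdown j j' k k' hj1 (by omega) hj1' (by omega) hne hk hk' (by omega)
        · have hj'' : j' = m + 1 := by omega
          subst hj''
          have hkk : k' = k₀ := huniq hk'
          subst hkk
          have hkpos : 1 ≤ k := nth_pos hk
          -- old down-diag of j is k + m - j = k' - 1 ≥ 1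
          have hl : ((k' - 1 : ℕ) : ℤ) = (k : ℤ) + m - j := by push_cast; omega
          have h1 : NthMember (k' - 1) (numeral j) ds' :=
            cdownr j k (k' - 1) hj1 (by omega) hk hl (by push_cast; omega)
          have h2 : NthMember k' (numeral j) (Term.cons t' ds') := by
            have := NthMember.tail t' h1
            have hk'1 : k' - 1 + 1 = k' := by omega
            rwa [hk'1] at this
          have : numeral j = numeral (m + 1) := nth_unique h2 hdM
          have := numeral_inj this
          omega
        · have hj'' : j = m + 1 := by omega
          subst hj''
          have hkk : k = k₀ := huniq hk
          subst hkk
          have hkpos : 1 ≤ k' := nth_pos hk'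
          have hl : ((k - 1 : ℕ) : ℤ) = (k' : ℤ) + m - j' := by push_cast; omega
          have h1 : NthMember (k - 1) (numeral j') ds' :=
            cdownr j' k' (k - 1) hj1' (by omega) hk' hl (by push_cast; omega)
          have h2 : NthMember k (numeral j') (Term.cons t' ds') := by
            have := NthMember.tail t' h1
            have hk1 : k - 1 + 1 = k := by omega
            rwa [hk1] at this
          have : numeral j' = numeral (m + 1) := nth_unique h2 hdM
          have := numeral_inj this
          omega
        · omega
      · -- positive up-diagonal numbers recorded in us
        intro j k l hj1 hj2 hk hl hlpos
        rcases Nat.lt_or_ge j (m + 1) with hj | hj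
        · have hl' : ((l + 1 : ℕ) : ℤ) = (k : ℤ) + j - m := by push_cast; omega
          have h1 : NthMember (l + 1) (numeral j) (Term.cons t₁ us) :=
            cupr j k (l + 1) hj1 (by omega) hk hl' (by omega)
          exact nth_tail hlpos h1
        · have hj' : j = m + 1 := by omega
          subst hj'
          have hkk : k = k₀ := huniq hk
          have hlk : l = k₀ := by omega
          subst hlk
          exact huM
      · -- positive down-diagonal numbers recorded in cons t' ds'
        intro j k l hj1 hj2 hk hl hlpos
        rcases Nat.lt_or_ge j (m + 1) with hj | hj
        · have hkpos : 1 ≤ k := nth_pos hk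
          have hl' : ((l - 1 : ℕ) : ℤ) = (k : ℤ) + m - j := by push_cast; omega
          have h1 : NthMember (l - 1) (numeral j) ds' :=
            cdownr j k (l - 1) hj1 (by omega) hk hl' (by push_cast; omega)
          have h2 := NthMember.tail t' h1
          have hl1 : l - 1 + 1 = l := by omega
          rwa [hl1] at h2
        · have hj' : j = m + 1 := by omega
          subst hj'
          have hkk : k = k₀ := huniq hk
          have hlk : l = k₀ := by omega
          subst hlk
          exact hdM

/-- Key step of the correctness proof: `S` is a model of
clause (2). -/
theorem spec_model_of_clause2 :
    (∀ i cs us ds t t₁ : Term,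
      Atom.pqs i cs (Term.cons t₁ us) ds ∈ Spec →
      Atom.pq (Term.succ i) cs us ds ∈ SpecPq →
      Atom.pqs (Term.succ i) cs us (Term.cons t ds) ∈ Spec) ∧
    (∀ i cs us ds u d : Term,
      Atom.pqs i cs (Term.cons u us) ds ∈ Spec →
      Atom.pq (Term.succ i) cs us ds ∈ Spec →
      Atom.pqs (Term.succ i) cs us (Term.cons d ds) ∈ Spec) := by
  constructor
  · exact key_step
  · intro i cs us ds u d h1 h2
    rcases h2 with h2 | h2
    · exact key_step i cs us ds d u h1 h2
    · exfalso
      rcases h2 with ⟨_, _, _, h⟩ | ⟨_, _, _, _, _, _, h, _⟩ <;>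
        exact Atom.noConfusion h
end

section
/- (Key step of the completeness proof.) Let i ≥ 0 and let cs, us, ds be ground terms such that (cs, us, ds) is correct up to i + 1 w.r.t. i + 1, and let l ≥ 1 be such that ⌜i+1⌝ is the l-th member of cs. Then ⌜i+1⌝ is also the l-th member of us and the l-th member of ds, and moreover (cs, us, ds) is correct up to i w.r.t. i + 1. -/
/-- Key step of the completeness proof. -/
theorem completeness_key_step (i : ℕ) (cs us ds : Term) (l : ℕ) (hl : 1 ≤ l)
    (h : CorrectUpTo (i + 1) (i + 1) cs us ds)
    (hcs : NthMember l (numeral (i + 1)) cs) :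
    NthMember l (numeral (i + 1)) us ∧ NthMember l (numeral (i + 1)) ds ∧
    CorrectUpTo i (i + 1) cs us ds := by
  obtain ⟨hm, hdl, hmem, hup, hdown, hus, hds⟩ := h
  refine ⟨?_, ?_, ?_⟩
  · exact hus (i+1) l l (by omega) le_rfl hcs (by push_cast; ring) (by omega)
  · exact hds (i+1) l l (by omega) le_rfl hcs (by push_cast; ring) (by omega)
  · exact ⟨by omega, hdl,
      fun j h1 h2 => hmem j h1 (by omega),
      fun j j' k k' a b c d e f g => hup j j' k k' a (by omega) c (by omega) e f g,
      fun j j' k k' a b c d e f g => hdown j j' k k' a (by omega) c (by omega) e f g,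
      fun j k l' a b c d e => hus j k l' a (by omega) c d e,
      fun j k l' a b c d e => hds j k l' a (by omega) c d e⟩
end
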